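/- Let q ≥ 2 and ν, m, t, s be integers with t ≤ s ≤ m−1, m ≥ t+2 and 2ν ≥ 3m+2. Define g(s) = [s choose t]_q · [m−t+1 choose 1]_q^(s−t) · N(ν,m,s) with N(ν,m,s) = ∏_{i=1}^{m-s} (q^(2(ν-m+i)) - 1)/(q^i - 1). Then g(s+1)/g(s) = (q^(s+1)−1)(q^(m−t+1)−1)(q^(m−s)−1) / ((q^(s−t+1)−1)(q−1)(q^(2(ν−s))−1)) < q^(2m+s+2−2ν) ≤ q^(3m+1−2ν) < 1. -/
import Mathlib


/-- The Gaussian binomial coefficient `[a choose b]_q` as a rational number. -/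
noncomputable def gaussBinom (q : ℚ) (a b : ℕ) : ℚ :=
  ∏ j ∈ Finset.range b, (q ^ (a - j) - 1) / (q ^ (b - j) - 1)

/-- `N(ν,m,s)`: the number of totally isotropic `m`-subspaces of a `2ν`-dimensional
symplectic space containing a fixed totally isotropic `s`-subspace. -/
noncomputable def NIso (q : ℚ) (ν m s : ℕ) : ℚ :=
  ∏ i ∈ Finset.Icc 1 (m - s), (q ^ (2 * (ν - m + i)) - 1) / (q ^ i - 1)


lemma aux_pos (Q : ℚ) (hQ : 1 < Q) (k : ℕ) (hk : k ≠ 0) : 0 < Q ^ k - 1 :=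
  sub_pos.2 (one_lt_pow₀ hQ hk)

lemma gb_pos (Q : ℚ) (hQ : 1 < Q) (a b : ℕ) (hb : b ≤ a) : 0 < gaussBinom Q a b := by
  unfold gaussBinom
  refine Finset.prod_pos fun j hj => ?_
  rw [Finset.mem_range] at hj
  exact div_pos (aux_pos Q hQ _ (by omega)) (aux_pos Q hQ _ (by omega))

lemma NIso_pos (Q : ℚ) (hQ : 1 < Q) (ν m s : ℕ) : 0 < NIso Q ν m s := by
  unfold NIso
  refine Finset.prod_pos fun i hi => ?_
  rw [Finset.mem_Icc] at hi
  exact div_pos (aux_pos Q hQ _ (by omega)) (aux_pos Q hQ _ (by omega))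

lemma gb_succ (Q : ℚ) (hQ : 1 < Q) (s t : ℕ) (hts : t ≤ s) :
    gaussBinom Q (s + 1) t * (Q ^ (s - t + 1) - 1) = (Q ^ (s + 1) - 1) * gaussBinom Q s t := by
  have key : (∏ j ∈ Finset.range t, (Q ^ (s + 1 - j) - 1)) * (Q ^ (s - t + 1) - 1)
      = (Q ^ (s + 1) - 1) * ∏ j ∈ Finset.range t, (Q ^ (s - j) - 1) := by
    have h1 : ∏ j ∈ Finset.range (t + 1), (Q ^ (s + 1 - j) - 1)
        = (∏ j ∈ Finset.range t, (Q ^ (s + 1 - j) - 1)) * (Q ^ (s + 1 - t) - 1) :=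
      Finset.prod_range_succ _ t
    have h2 : ∏ j ∈ Finset.range (t + 1), (Q ^ (s + 1 - j) - 1)
        = (∏ j ∈ Finset.range t, (Q ^ (s + 1 - (j + 1)) - 1)) * (Q ^ (s + 1 - 0) - 1) :=
      Finset.prod_range_succ' _ t
    simp only [Nat.succ_sub_succ, Nat.sub_zero] at h2
    rw [show s - t + 1 = s + 1 - t from by omega, ← h1, h2, mul_comm]
  unfold gaussBinom
  rw [Finset.prod_div_distrib, Finset.prod_div_distrib, div_mul_eq_mul_div, key,
    mul_div_assoc]

lemma NIso_succ (Q : ℚ) (ν m s : ℕ) (hs1m : s + 1 ≤ m) (hmν : m ≤ ν) :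
    NIso Q ν m s = NIso Q ν m (s + 1) *
      ((Q ^ (2 * (ν - s)) - 1) / (Q ^ (m - s) - 1)) := by
  unfold NIso
  rw [show m - s = (m - (s + 1)) + 1 from by omega, Finset.prod_Icc_succ_top (by omega)]
  congr 1
  rw [show 2 * (ν - m + (m - (s + 1) + 1)) = 2 * (ν - s) from by omega]

lemma gb_one (Q : ℚ) (k : ℕ) : gaussBinom Q k 1 = (Q ^ k - 1) / (Q - 1) := by
  unfold gaussBinom
  simp

set_option maxHeartbeats 1000000 in
theorem stmt_15 (q ν m t s : ℕ) (hq : 2 ≤ q) (hts : t ≤ s) (hsm : s ≤ m - 1)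
    (hmt : t + 2 ≤ m) (hνm : 3 * m + 2 ≤ 2 * ν) :
    (gaussBinom (q : ℚ) (s + 1) t * gaussBinom (q : ℚ) (m - t + 1) 1 ^ (s + 1 - t) *
          NIso (q : ℚ) ν m (s + 1)) /
        (gaussBinom (q : ℚ) s t * gaussBinom (q : ℚ) (m - t + 1) 1 ^ (s - t) *
          NIso (q : ℚ) ν m s) =
      (((q : ℚ) ^ (s + 1) - 1) * ((q : ℚ) ^ (m - t + 1) - 1) * ((q : ℚ) ^ (m - s) - 1)) /
        ((((q : ℚ) ^ (s - t + 1) - 1)) * ((q : ℚ) - 1) * ((q : ℚ) ^ (2 * (ν - s)) - 1)) ∧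
    (((q : ℚ) ^ (s + 1) - 1) * ((q : ℚ) ^ (m - t + 1) - 1) * ((q : ℚ) ^ (m - s) - 1)) /
        ((((q : ℚ) ^ (s - t + 1) - 1)) * ((q : ℚ) - 1) * ((q : ℚ) ^ (2 * (ν - s)) - 1)) <
      (q : ℚ) ^ (2 * m + s + 2 - 2 * ν : ℤ) ∧
    (q : ℚ) ^ (2 * m + s + 2 - 2 * ν : ℤ) ≤ (q : ℚ) ^ (3 * m + 1 - 2 * ν : ℤ) ∧
    (q : ℚ) ^ (3 * m + 1 - 2 * ν : ℤ) < 1 := by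
  set Q : ℚ := (q : ℚ) with hQdef
  have hQ2 : (2 : ℚ) ≤ Q := by rw [hQdef]; exact_mod_cast hq
  have hQ1 : (1 : ℚ) < Q := by linarith
  have hQ0 : (0 : ℚ) < Q := by linarith
  have hs1m : s + 1 ≤ m := by omega
  have hmν : m ≤ ν := by omega
  have hsν : s + 1 ≤ ν := by omega
  -- positivity facts
  have hG : 0 < gaussBinom Q s t := gb_pos Q hQ1 s t hts
  have hG1 : 0 < gaussBinom Q (m - t + 1) 1 := gb_pos Q hQ1 _ 1 (by omega)
  have hN : 0 < NIso Q ν m (s + 1) := NIso_pos Q hQ1 ν m (s + 1)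
  have hX : 0 < Q ^ (s - t + 1) - 1 := aux_pos Q hQ1 _ (by omega)
  have hq1 : 0 < Q - 1 := by linarith
  have h2ν : 0 < Q ^ (2 * (ν - s)) - 1 := aux_pos Q hQ1 _ (by omega)
  have hms : 0 < Q ^ (m - s) - 1 := aux_pos Q hQ1 _ (by omega)
  have hs1 : 0 < Q ^ (s + 1) - 1 := aux_pos Q hQ1 _ (by omega)
  have hmt1 : 0 < Q ^ (m - t + 1) - 1 := aux_pos Q hQ1 _ (by omega)
  -- Part 1: the ratio identity
  have e1 := gb_succ Q hQ1 s t hts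
  have eN := NIso_succ Q ν m s hs1m hmν
  have epow : gaussBinom Q (m - t + 1) 1 ^ (s + 1 - t)
      = gaussBinom Q (m - t + 1) 1 ^ (s - t) * gaussBinom Q (m - t + 1) 1 := by
    rw [← pow_succ]
    congr 1
    omega
  have hgb1 : gaussBinom Q (s + 1) t = (Q ^ (s + 1) - 1) * gaussBinom Q s t
      / (Q ^ (s - t + 1) - 1) := by
    rw [eq_div_iff hX.ne']
    exact e1
  have part1 : (gaussBinom Q (s + 1) t * gaussBinom Q (m - t + 1) 1 ^ (s + 1 - t) *
          NIso Q ν m (s + 1)) /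
        (gaussBinom Q s t * gaussBinom Q (m - t + 1) 1 ^ (s - t) * NIso Q ν m s) =
      ((Q ^ (s + 1) - 1) * (Q ^ (m - t + 1) - 1) * (Q ^ (m - s) - 1)) /
        (((Q ^ (s - t + 1) - 1)) * (Q - 1) * (Q ^ (2 * (ν - s)) - 1)) := by
    rw [hgb1, epow, eN, gb_one]
    have hp : (0:ℚ) < gaussBinom Q (m - t + 1) 1 ^ (s - t) := pow_pos hG1 _
    field_simp
  refine ⟨part1, ?_, ?_, ?_⟩
  · -- Part 2
    have hz : Q ^ (2 * m + s + 2 - 2 * ν : ℤ) = Q ^ (2 * m + s + 2) / Q ^ (2 * ν) := by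
      rw [show ((2 * m + s + 2 : ℤ) - 2 * ν : ℤ)
          = ((2 * m + s + 2 : ℕ) : ℤ) - ((2 * ν : ℕ) : ℤ) from by push_cast; ring,
        zpow_sub₀ hQ0.ne', zpow_natCast, zpow_natCast]
    rw [hz, div_lt_div_iff₀ (by positivity) (by positivity)]
    -- bounds
    have hb1 : (Q ^ (s + 1) - 1) * Q ^ (2 * (ν - s)) ≤ Q ^ (s + 1) * (Q ^ (2 * (ν - s)) - 1) := by
      have h := pow_le_pow_right₀ hQ1.le (show s + 1 ≤ 2 * (ν - s) by omega)
      nlinarith [pow_pos hQ0 (s + 1), pow_pos hQ0 (2 * (ν - s))]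
    have hb2 : Q ^ (m - t + 1) - 1 < Q ^ (m - s + 1) * (Q ^ (s - t + 1) - 1) := by
      have hcomb : Q ^ (m - s + 1) * Q ^ (s - t + 1) = Q * Q ^ (m - t + 1) := by
        rw [← pow_add, ← pow_succ']
        congr 1
        omega
      have hA : Q ^ (m - s + 1) ≤ Q ^ (m - t + 1) :=
        pow_le_pow_right₀ hQ1.le (by omega)
      nlinarith [pow_pos hQ0 (m - t + 1)]
    have hb3 : Q ^ (m - s) - 1 ≤ Q ^ (m - s) * (Q - 1) := by
      nlinarith [pow_pos hQ0 (m - s)]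
    have h12 : ((Q ^ (s + 1) - 1) * Q ^ (2 * (ν - s))) * (Q ^ (m - t + 1) - 1)
        < (Q ^ (s + 1) * (Q ^ (2 * (ν - s)) - 1)) * (Q ^ (m - s + 1) * (Q ^ (s - t + 1) - 1)) :=
      mul_lt_mul' hb1 hb2 hmt1.le (by positivity)
    have h123 : ((Q ^ (s + 1) - 1) * Q ^ (2 * (ν - s))) * (Q ^ (m - t + 1) - 1) * (Q ^ (m - s) - 1)
        < (Q ^ (s + 1) * (Q ^ (2 * (ν - s)) - 1)) * (Q ^ (m - s + 1) * (Q ^ (s - t + 1) - 1))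
          * (Q ^ (m - s) * (Q - 1)) :=
      mul_lt_mul h12 hb3 hms (by positivity)
    have hsplit : Q ^ (2 * ν) = Q ^ (2 * (ν - s)) * Q ^ (2 * s) := by
      rw [← pow_add]; congr 1; omega
    have hexp : Q ^ (s + 1) * Q ^ (m - s + 1) * Q ^ (m - s) * Q ^ (2 * s)
        = Q ^ (2 * m + s + 2) := by
      rw [← pow_add, ← pow_add, ← pow_add]; congr 1; omega
    calc (Q ^ (s + 1) - 1) * (Q ^ (m - t + 1) - 1) * (Q ^ (m - s) - 1) * Q ^ (2 * ν)
        = ((Q ^ (s + 1) - 1) * Q ^ (2 * (ν - s))) * (Q ^ (m - t + 1) - 1)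
          * (Q ^ (m - s) - 1) * Q ^ (2 * s) := by rw [hsplit]; ring
      _ < (Q ^ (s + 1) * (Q ^ (2 * (ν - s)) - 1)) * (Q ^ (m - s + 1) * (Q ^ (s - t + 1) - 1))
          * (Q ^ (m - s) * (Q - 1)) * Q ^ (2 * s) := by
            exact mul_lt_mul_of_pos_right h123 (by positivity)
      _ = Q ^ (2 * m + s + 2) * ((Q ^ (s - t + 1) - 1) * (Q - 1) * (Q ^ (2 * (ν - s)) - 1)) := by
            rw [← hexp]; ring
  · exact zpow_le_zpow_right₀ hQ1.le (by omega)
  · exact zpow_lt_one_of_neg₀ hQ1 (by omega)
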